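/- Let V = (v_i) be a normalized, 1-unconditional, right dominant basic sequence. If X is a quotient of a Banach space Z with a shrinking bimonotone FDD (F_i) satisfying subsequential V upper block estimates (i.e., there is a bounded linear surjection Q : Z -> X), then X satisfies subsequential V upper tree estimates. -/

import Mathlib

open Filter Topology Set

noncomputable section

/-- A bundled (real) Banach space. -/
structure BanachSp : Type 1 where
  carrier : Type
  [nacg : NormedAddCommGroup carrier]
  [nsp : NormedSpace ℝ carrier]
  [complete : CompleteSpace carrier]

attribute [instance] BanachSp.nacg BanachSp.nsp BanachSp.complete

instance : CoeSort BanachSp Type := ⟨BanachSp.carrier⟩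

section Seqs

variable {V : Type*} [NormedAddCommGroup V] [NormedSpace ℝ V]
variable {W : Type*} [NormedAddCommGroup W] [NormedSpace ℝ W]
variable {X : Type*} [NormedAddCommGroup X] [NormedSpace ℝ X]

/-- `DomBy u x C` : the sequence `(u i)` `C`-dominates the sequence `(x i)`, i.e.
`‖∑ a i • x i‖ ≤ C * ‖∑ a i • u i‖` for all finitely supported scalars. -/
def DomBy (u : ℕ → V) (x : ℕ → X) (C : ℝ) : Prop :=
  ∀ (a : ℕ → ℝ) (n : ℕ),
    ‖∑ i ∈ Finset.range n, a i • x i‖ ≤ C * ‖∑ i ∈ Finset.range n, a i • u i‖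

def IsNormalized (v : ℕ → V) : Prop := ∀ i, ‖v i‖ = 1

/-- A basic sequence: nonzero vectors with uniformly bounded partial sum projections. -/
def IsBasicSeq (v : ℕ → V) : Prop :=
  (∀ i, v i ≠ 0) ∧ ∃ K : ℝ, 1 ≤ K ∧ ∀ (a : ℕ → ℝ) (m n : ℕ), m ≤ n →
    ‖∑ i ∈ Finset.range m, a i • v i‖ ≤ K * ‖∑ i ∈ Finset.range n, a i • v i‖

/-- `1`-unconditionality : changing signs of coefficients does not change the norm. -/
def IsOneUnconditional (v : ℕ → V) : Prop :=
  ∀ (a ε : ℕ → ℝ), (∀ i, ε i = 1 ∨ ε i = -1) → ∀ n : ℕ,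
    ‖∑ i ∈ Finset.range n, (ε i * a i) • v i‖ = ‖∑ i ∈ Finset.range n, a i • v i‖

/-- Bimonotonicity of a basic sequence: interval projections have norm at most one. -/
def IsBimonotoneSeq (v : ℕ → V) : Prop :=
  ∀ (a : ℕ → ℝ) (p q n : ℕ), q ≤ n →
    ‖∑ i ∈ Finset.Ico p q, a i • v i‖ ≤ ‖∑ i ∈ Finset.range n, a i • v i‖

/-- `(v i)` is `D`-right-dominant : if `m i ≤ n i` for all `i` then `(v (m i))` is
`D`-dominated by `(v (n i))`. -/
def RightDominantC (v : ℕ → V) (D : ℝ) : Prop :=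
  ∀ m n : ℕ → ℕ, StrictMono m → StrictMono n → (∀ i, m i ≤ n i) →
    DomBy (fun i => v (n i)) (fun i => v (m i)) D

def RightDominant (v : ℕ → V) : Prop := ∃ D : ℝ, 1 ≤ D ∧ RightDominantC v D

/-- `(v i)` is `D`-left-dominant : if `m i ≤ n i` for all `i` then `(v (m i))`
`D`-dominates `(v (n i))`. -/
def LeftDominantC (v : ℕ → V) (D : ℝ) : Prop :=
  ∀ m n : ℕ → ℕ, StrictMono m → StrictMono n → (∀ i, m i ≤ n i) →
    DomBy (fun i => v (m i)) (fun i => v (n i)) D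

/-- `C`-block-stability: any two normalized block bases whose blocks run along the same
successive intervals are `C`-equivalent. -/
def BlockStableC (v : ℕ → V) (C : ℝ) : Prop :=
  ∀ (x y : ℕ → V) (k : ℕ → ℕ), StrictMono k →
    (∀ i, x i ∈ Submodule.span ℝ (v '' Set.Ico (k i) (k (i+1)))) →
    (∀ i, y i ∈ Submodule.span ℝ (v '' Set.Ico (k i) (k (i+1)))) →
    (∀ i, ‖x i‖ = 1) → (∀ i, ‖y i‖ = 1) → DomBy x y C

def BlockStable (v : ℕ → V) : Prop := ∃ C : ℝ, 1 ≤ C ∧ BlockStableC v C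

/-- A basic sequence is shrinking if every functional is small on far tails of its span. -/
def ShrinkingSeq (v : ℕ → V) : Prop :=
  ∀ φ : V →L[ℝ] ℝ, ∀ δ : ℝ, 0 < δ → ∃ m : ℕ, ∀ (a : ℕ → ℝ) (n : ℕ),
    ‖∑ i ∈ Finset.Ico m n, a i • v i‖ ≤ 1 →
    |φ (∑ i ∈ Finset.Ico m n, a i • v i)| ≤ δ

/-- A basic sequence is boundedly complete if series with bounded partial sums converge. -/
def BoundedlyCompleteSeq (v : ℕ → V) : Prop :=
  ∀ a : ℕ → ℝ, (∃ M : ℝ, ∀ n, ‖∑ i ∈ Finset.range n, a i • v i‖ ≤ M) →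
    ∃ s : V, Tendsto (fun n => ∑ i ∈ Finset.range n, a i • v i) atTop (𝓝 s)

/-- `(w i)` represents (isometrically) the sequence of biorthogonal functionals of the
`1`-unconditional basic sequence `(v i)`: the norm of `∑ a i • w i` is the supremum of the
pairings `∑ a i * b i` over `b` with `‖∑ b i • v i‖ ≤ 1`. -/
def IsBiorthDual (v : ℕ → V) (w : ℕ → W) : Prop :=
  ∀ (a : ℕ → ℝ) (n : ℕ),
    IsLUB {r : ℝ | ∃ b : ℕ → ℝ, ‖∑ i ∈ Finset.range n, b i • v i‖ ≤ 1 ∧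
      r = ∑ i ∈ Finset.range n, a i * b i} ‖∑ i ∈ Finset.range n, a i • w i‖

def WeaklyNullSeq (x : ℕ → X) : Prop :=
  ∀ φ : X →L[ℝ] ℝ, Tendsto (fun i => φ (x i)) atTop (𝓝 0)

end Seqs

/-- A finite-dimensional decomposition (FDD) of `Z` : finite-dimensional subspaces `E i`
together with the coordinate projections `P i`, such that every `z` is the sum of its
coordinates, uniquely. -/
structure FDD (Z : Type*) [NormedAddCommGroup Z] [NormedSpace ℝ Z] where
  E : ℕ → Submodule ℝ Z
  finDim : ∀ n, FiniteDimensional ℝ (E n)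
  P : ℕ → Z →L[ℝ] Z
  mem_E : ∀ i z, P i z ∈ E i
  sum_eq : ∀ z : Z, Tendsto (fun n => ∑ i ∈ Finset.range n, P i z) atTop (𝓝 z)
  unique : ∀ (z : Z) (f : ℕ → Z), (∀ i, f i ∈ E i) →
    Tendsto (fun n => ∑ i ∈ Finset.range n, f i) atTop (𝓝 z) → ∀ i, f i = P i z

namespace FDD

variable {Z : Type*} [NormedAddCommGroup Z] [NormedSpace ℝ Z]
variable {V : Type*} [NormedAddCommGroup V] [NormedSpace ℝ V]
variable {W : Type*} [NormedAddCommGroup W] [NormedSpace ℝ W]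

/-- The canonical projection `P^E_s` onto the span of `(E i : i ∈ s)`. -/
def proj (F : FDD Z) (s : Finset ℕ) : Z →L[ℝ] Z := ∑ i ∈ s, F.P i

/-- The support of a vector with respect to the FDD. -/
def supp (F : FDD Z) (z : Z) : Set ℕ := {i | F.P i z ≠ 0}

/-- `min supp_E z`. -/
def minSupp (F : FDD Z) (z : Z) : ℕ := sInf (F.supp z)

/-- A block sequence with respect to an FDD: supports lie in successive intervals. -/
def IsBlockSeq (F : FDD Z) (z : ℕ → Z) : Prop :=
  ∃ k : ℕ → ℕ, StrictMono k ∧ ∀ i, F.supp (z i) ⊆ Set.Ico (k i) (k (i+1))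

/-- Bimonotonicity: all interval projections have norm at most `1`. -/
def Bimonotone (F : FDD Z) : Prop :=
  ∀ (m n : ℕ) (z : Z), ‖F.proj (Finset.Icc m n) z‖ ≤ ‖z‖

/-- `C` is the projection constant: the supremum of norms of interval projections. -/
def IsProjConst (F : FDD Z) (C : ℝ) : Prop :=
  IsLUB {r : ℝ | ∃ (m n : ℕ) (z : Z), ‖z‖ ≤ 1 ∧ r = ‖F.proj (Finset.Icc m n) z‖} C

/-- The FDD is shrinking: every functional is the norm limit of its finite-dimensional
restrictions, i.e. the biorthogonal functionals form an FDD of the dual. -/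
def Shrinking (F : FDD Z) : Prop :=
  ∀ φ : Z →L[ℝ] ℝ,
    Tendsto (fun n => ‖φ - φ.comp (F.proj (Finset.range n))‖) atTop (𝓝 0)

/-- The FDD is boundedly complete. -/
def BoundedlyComplete (F : FDD Z) : Prop :=
  ∀ f : ℕ → Z, (∀ i, f i ∈ F.E i) →
    (∃ M : ℝ, ∀ n, ‖∑ i ∈ Finset.range n, f i‖ ≤ M) →
    ∃ z : Z, Tendsto (fun n => ∑ i ∈ Finset.range n, f i) atTop (𝓝 z)

/-- `H` is a blocking of `F`. -/
def IsBlockingOf (H F : FDD Z) : Prop :=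
  ∃ m : ℕ → ℕ, m 0 = 0 ∧ StrictMono m ∧
    ∀ j, H.E j = ⨆ i ∈ Finset.Ico (m j) (m (j+1)), F.E i

/-- The closed span `Z_m` of the subspaces `E i`, `i ≥ m` (the first `m` coordinates
removed). -/
def tail (F : FDD Z) (m : ℕ) : Set Z :=
  closure (↑(⨆ i ∈ Set.Ici m, F.E i) : Set Z)

/-- Subsequential `C`-`V`-upper block estimates. -/
def UpperBlockC (F : FDD Z) (v : ℕ → V) (C : ℝ) : Prop :=
  ∀ z : ℕ → Z, F.IsBlockSeq z → (∀ i, ‖z i‖ = 1) →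
    DomBy (fun i => v (F.minSupp (z i))) z C

def UpperBlock (F : FDD Z) (v : ℕ → V) : Prop := ∃ C : ℝ, 1 ≤ C ∧ F.UpperBlockC v C

/-- Subsequential `C`-`V`-lower block estimates. -/
def LowerBlockC (F : FDD Z) (v : ℕ → V) (C : ℝ) : Prop :=
  ∀ z : ℕ → Z, F.IsBlockSeq z → (∀ i, ‖z i‖ = 1) →
    DomBy z (fun i => v (F.minSupp (z i))) C

def LowerBlock (F : FDD Z) (v : ℕ → V) : Prop := ∃ C : ℝ, 1 ≤ C ∧ F.LowerBlockC v C

/-- A functional supported (w.r.t. the biorthogonal FDD `(E i ^*)`) on the finite set `s`. -/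
def dualSupported (F : FDD Z) (s : Finset ℕ) (φ : Z →L[ℝ] ℝ) : Prop :=
  ∀ z : Z, φ z = φ (F.proj s z)

/-- A block sequence of the biorthogonal functionals `(E i ^*)`. -/
def IsDualBlockSeq (F : FDD Z) (φ : ℕ → Z →L[ℝ] ℝ) : Prop :=
  ∃ k : ℕ → ℕ, StrictMono k ∧
    ∀ i, F.dualSupported (Finset.Ico (k i) (k (i+1))) (φ i)

/-- `min supp` of a functional w.r.t. `(E i ^*)`. -/
def dualMinSupp (F : FDD Z) (φ : Z →L[ℝ] ℝ) : ℕ :=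
  sInf {j | ∃ z, φ (F.P j z) ≠ 0}

/-- The biorthogonal FDD `(E i ^*)` satisfies subsequential `C`-`V^*`-lower block
estimates in `Z^(*)`. -/
def DualLowerBlockC (F : FDD Z) (w : ℕ → W) (C : ℝ) : Prop :=
  ∀ φ : ℕ → Z →L[ℝ] ℝ, F.IsDualBlockSeq φ → (∀ i, ‖φ i‖ = 1) →
    DomBy φ (fun i => w (F.dualMinSupp (φ i))) C

def DualLowerBlock (F : FDD Z) (w : ℕ → W) : Prop := ∃ C : ℝ, 1 ≤ C ∧ F.DualLowerBlockC w C

/-- The biorthogonal FDD `(E i ^*)` satisfies subsequential `C`-`V`-upper block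
estimates. -/
def DualUpperBlockC (F : FDD Z) (w : ℕ → W) (C : ℝ) : Prop :=
  ∀ φ : ℕ → Z →L[ℝ] ℝ, F.IsDualBlockSeq φ → (∀ i, ‖φ i‖ = 1) →
    DomBy (fun i => w (F.dualMinSupp (φ i))) φ C

/-- A `δ̄`-skipped block sequence w.r.t. the FDD. -/
def IsSkippedBlock (F : FDD Z) (δ : ℕ → ℝ) (y : ℕ → Z) : Prop :=
  (∀ i, ‖y i‖ = 1) ∧ ∃ k : ℕ → ℕ, k 0 = 0 ∧ StrictMono k ∧
    ∀ i, ‖F.proj (Finset.Ioo (k i) (k (i+1))) (y i) - y i‖ < δ i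

end FDD

section Trees

variable {V : Type*} [NormedAddCommGroup V] [NormedSpace ℝ V]
variable {W : Type*} [NormedAddCommGroup W] [NormedSpace ℝ W]

/-- The finite set `{n 0, …, n (2l+1)}`, i.e. the branch node of level `l+1` along the
strictly increasing sequence `n`. -/
def branchSet (n : ℕ → ℕ) (l : ℕ) : Finset ℕ := Finset.image n (Finset.range (2*l+2))

/-- A normalized weakly null even tree in `X` (indexed by finite sets of naturals, which
correspond to finite strictly increasing sequences). -/
def WNEvenTree {X : Type*} [NormedAddCommGroup X] [NormedSpace ℝ X]
    (x : Finset ℕ → X) : Prop :=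
  (∀ s : Finset ℕ, Even s.card → ‖x s‖ = 1) ∧
  ∀ s : Finset ℕ, Odd s.card →
    ∀ φ : X →L[ℝ] ℝ, Tendsto (fun k => φ (x (insert k s))) atTop (𝓝 0)

/-- Subsequential `C`-`V`-upper tree estimates. -/
def UpperTreeC (v : ℕ → V) (X : Type*) [NormedAddCommGroup X] [NormedSpace ℝ X]
    (C : ℝ) : Prop :=
  ∀ x : Finset ℕ → X, WNEvenTree x →
    ∃ n : ℕ → ℕ, StrictMono n ∧
      DomBy (fun l => v (n (2*l))) (fun l => x (branchSet n l)) C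

/-- Subsequential `V`-upper tree estimates. -/
def UpperTree (v : ℕ → V) (X : Type*) [NormedAddCommGroup X] [NormedSpace ℝ X] : Prop :=
  ∃ C : ℝ, 1 ≤ C ∧ UpperTreeC v X C

/-- A normalized `w^*`-null even tree in the dual of `X`. -/
def WStarNullEvenTree {X : Type*} [NormedAddCommGroup X] [NormedSpace ℝ X]
    (f : Finset ℕ → (X →L[ℝ] ℝ)) : Prop :=
  (∀ s : Finset ℕ, Even s.card → ‖f s‖ = 1) ∧
  ∀ s : Finset ℕ, Odd s.card →
    ∀ u : X, Tendsto (fun k => f (insert k s) u) atTop (𝓝 0)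

/-- Subsequential `C`-`V^*`-lower `w^*` tree estimates for the dual of `X`. -/
def LowerWStarTreeC (w : ℕ → W) (X : Type*) [NormedAddCommGroup X] [NormedSpace ℝ X]
    (C : ℝ) : Prop :=
  ∀ f : Finset ℕ → (X →L[ℝ] ℝ), WStarNullEvenTree f →
    ∃ n : ℕ → ℕ, StrictMono n ∧
      DomBy (fun l => f (branchSet n l)) (fun l => w (n (2*l))) C

end Trees

section Maps

variable {X : Type*} [NormedAddCommGroup X] [NormedSpace ℝ X]
variable {Y : Type*} [NormedAddCommGroup Y] [NormedSpace ℝ Y]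

/-- `X` embeds isomorphically into `Y`. -/
def Embeds (X Y : Type*) [NormedAddCommGroup X] [NormedSpace ℝ X]
    [NormedAddCommGroup Y] [NormedSpace ℝ Y] : Prop :=
  ∃ T : X →L[ℝ] Y, ∃ c : ℝ, 0 < c ∧ ∀ x : X, c * ‖x‖ ≤ ‖T x‖

/-- `X` is a quotient of `Z` (there is a bounded linear surjection `Z → X`). -/
def IsQuotientOf (X Z : Type*) [NormedAddCommGroup X] [NormedSpace ℝ X]
    [NormedAddCommGroup Z] [NormedSpace ℝ Z] : Prop :=
  ∃ Q : Z →L[ℝ] X, Function.Surjective Q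

/-- A map between dual spaces is `w^*`-`w^*` continuous. -/
def WStarWStarContinuous {X Z : Type*} [NormedAddCommGroup X] [NormedSpace ℝ X]
    [NormedAddCommGroup Z] [NormedSpace ℝ Z]
    (T : StrongDual ℝ X →L[ℝ] StrongDual ℝ Z) : Prop :=
  Continuous (fun φ : WeakDual ℝ X =>
    StrongDual.toWeakDual (T (WeakDual.toStrongDual φ)))

end Maps

/-!
Let `K` be an open-mapping constant of `Q`. Along a branch of a normalized weakly null even tree,
each odd-level index `m` is chosen at a nontrivial coordinate `E m` beyond everything used so far
(there are infinitely many, since otherwise `X` would be finite dimensional and carry no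
normalized weakly null sequence), and then a successor whose vector is within `2⁻ˡ` of `Q b` for
a block `b` of norm at most `2K + 2` starting exactly at `m`. To find it, lift the successors with
norm at most `K`: their heads `P_[0,m)` converge along a subsequence by compactness, and by Mazur
some convex combination of the successors is small, so the same combination of lifts, corrected
by a small lift, lies in `ker Q` and has almost the same head. Subtracting it from the lift of a
late successor leaves a lift with small head, which is cut off on the right and adjusted by a
small vector of `E m`. The block estimate for the normalized blocks and the `1`-unconditionality
of `V`, which absorbs the multipliers `‖b_l‖` and the summable errors, give the tree estimate.
-/

section Unconditional

variable {V : Type*} [NormedAddCommGroup V] [NormedSpace ℝ V] {v : ℕ → V}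

/-- Shrinking one coefficient is a convex combination of the sum and its sign flip at `j`. -/
theorem IsOneUnconditional.norm_sum_mul_single_le (hv : IsOneUnconditional v) (a : ℕ → ℝ)
    {t : ℝ} (ht : |t| ≤ 1) (j n : ℕ) :
    ‖∑ i ∈ Finset.range n, ((if i = j then t else 1) * a i) • v i‖
      ≤ ‖∑ i ∈ Finset.range n, a i • v i‖ := by
  set ε : ℕ → ℝ := fun i => if i = j then -1 else 1
  have hε : ∀ i, ε i = 1 ∨ ε i = -1 := fun i => by by_cases h : i = j <;> simp [ε, h]
  have hsplit : ∑ i ∈ Finset.range n, ((if i = j then t else 1) * a i) • v i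
      = ((1 + t) / 2) • ∑ i ∈ Finset.range n, a i • v i
        + ((1 - t) / 2) • ∑ i ∈ Finset.range n, (ε i * a i) • v i := by
    simp only [Finset.smul_sum, smul_smul, ← Finset.sum_add_distrib, ← add_smul]
    refine Finset.sum_congr rfl fun i _ => ?_
    by_cases h : i = j <;> simp only [ε, h, if_true, if_false] <;> ring_nf
  obtain ⟨ht₁, ht₂⟩ := abs_le.1 ht
  calc _ ≤ ((1 + t) / 2) * ‖∑ i ∈ Finset.range n, a i • v i‖
        + ((1 - t) / 2) * ‖∑ i ∈ Finset.range n, (ε i * a i) • v i‖ := by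
        rw [hsplit]
        refine (norm_add_le _ _).trans_eq ?_
        rw [norm_smul_of_nonneg (by linarith), norm_smul_of_nonneg (by linarith)]
    _ = ‖∑ i ∈ Finset.range n, a i • v i‖ := by rw [hv a ε hε n]; ring

theorem IsOneUnconditional.norm_sum_mul_le (hv : IsOneUnconditional v) (a c : ℕ → ℝ)
    (hc : ∀ i, |c i| ≤ 1) (n : ℕ) :
    ‖∑ i ∈ Finset.range n, (c i * a i) • v i‖ ≤ ‖∑ i ∈ Finset.range n, a i • v i‖ := by
  suffices h : ∀ j, ‖∑ i ∈ Finset.range n, ((if i < j then c i else 1) * a i) • v i‖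
      ≤ ‖∑ i ∈ Finset.range n, a i • v i‖ by
    refine (h n).trans_eq' ?_
    exact congrArg norm (Finset.sum_congr rfl fun i hi => by
      rw [if_pos (Finset.mem_range.1 hi)])
  intro j
  induction j with
  | zero => simp
  | succ j ih =>
    refine le_trans (le_of_eq ?_) ((hv.norm_sum_mul_single_le
      (fun i => (if i < j then c i else 1) * a i) (hc j) j n).trans ih)
    refine congrArg norm (Finset.sum_congr rfl fun i _ => ?_)
    rcases lt_trichotomy i j with h | rfl | h
    · simp [h, h.ne, Nat.lt_succ_of_lt h]
    · simp
    · simp [h.ne', h.not_gt, show ¬ i < j + 1 by omega]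

theorem IsOneUnconditional.abs_le_norm_sum (hv : IsOneUnconditional v) (hn : IsNormalized v)
    (a : ℕ → ℝ) {j n : ℕ} (hj : j < n) :
    |a j| ≤ ‖∑ i ∈ Finset.range n, a i • v i‖ := by
  have h := hv.norm_sum_mul_le a (fun i => if i = j then 1 else 0)
    (fun i => by by_cases h : i = j <;> simp [h]) n
  rwa [Finset.sum_eq_single_of_mem j (Finset.mem_range.2 hj) (fun i _ hi => by simp [hi]),
    if_pos rfl, one_mul, norm_smul, hn j, mul_one, Real.norm_eq_abs] at h

theorem sum_range_smul_comp_eq_extend {m : ℕ → ℕ} (hm : StrictMono m) (c : ℕ → ℝ) (N : ℕ) :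
    ∑ l ∈ Finset.range N, c l • v (m l)
      = ∑ i ∈ Finset.range (m N), Function.extend m c 0 i • v i := by
  have himage : (Finset.range N).image m ⊆ Finset.range (m N) := by
    simp only [Finset.image_subset_iff, Finset.mem_range]
    exact fun l hl => hm hl
  rw [← Finset.sum_subset himage, Finset.sum_image fun _ _ _ _ h => hm.injective h]
  · simp [hm.injective.extend_apply]
  · intro i hi hni
    rw [Function.extend_apply', Pi.zero_apply, zero_smul]
    rintro ⟨l, rfl⟩
    exact hni (Finset.mem_image_of_mem m
      (Finset.mem_range.2 (hm.lt_iff_lt.1 (Finset.mem_range.1 hi))))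

theorem IsOneUnconditional.comp_strictMono (hv : IsOneUnconditional v) {m : ℕ → ℕ}
    (hm : StrictMono m) : IsOneUnconditional (fun l => v (m l)) := by
  intro a ε hε N
  have hε' : ∀ i, Function.extend m ε 1 i = 1 ∨ Function.extend m ε 1 i = -1 := by
    intro i
    by_cases h : ∃ l, m l = i
    · obtain ⟨l, rfl⟩ := h
      rw [hm.injective.extend_apply]
      exact hε l
    · simp [Function.extend_apply' _ _ _ h]
  have hmul : Function.extend m (fun l => ε l * a l) 0
      = fun i => Function.extend m ε 1 i * Function.extend m a 0 i := by
    funext i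
    by_cases h : ∃ l, m l = i
    · obtain ⟨l, rfl⟩ := h
      simp only [hm.injective.extend_apply]
    · simp [Function.extend_apply' _ _ _ h]
  rw [sum_range_smul_comp_eq_extend hm, sum_range_smul_comp_eq_extend hm, hmul]
  exact hv _ _ hε' _

end Unconditional

section Domination

variable {V : Type*} [NormedAddCommGroup V] [NormedSpace ℝ V]
variable {X : Type*} [NormedAddCommGroup X] [NormedSpace ℝ X]
variable {Y : Type*} [NormedAddCommGroup Y] [NormedSpace ℝ Y]
variable {u : ℕ → V} {x : ℕ → X} {C : ℝ}

theorem DomBy.map (h : DomBy u x C) (T : X →L[ℝ] Y) : DomBy u (fun i => T (x i)) (‖T‖ * C) :=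
  fun a n => calc
    ‖∑ i ∈ Finset.range n, a i • T (x i)‖ = ‖T (∑ i ∈ Finset.range n, a i • x i)‖ := by
      simp only [map_sum, map_smul]
    _ ≤ ‖T‖ * (C * ‖∑ i ∈ Finset.range n, a i • u i‖) :=
      (T.le_opNorm _).trans (mul_le_mul_of_nonneg_left (h a n) (norm_nonneg T))
    _ = ‖T‖ * C * ‖∑ i ∈ Finset.range n, a i • u i‖ := by ring

theorem DomBy.smul_of_isOneUnconditional (h : DomBy u x C) (hu : IsOneUnconditional u)
    (hC : 0 ≤ C) {c : ℕ → ℝ} {R : ℝ} (hR : 0 < R) (hc : ∀ i, |c i| ≤ R) :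
    DomBy u (fun i => c i • x i) (C * R) := fun a n => calc
  ‖∑ i ∈ Finset.range n, a i • c i • x i‖ = ‖∑ i ∈ Finset.range n, (a i * c i) • x i‖ := by
    simp only [smul_smul]
  _ ≤ C * ‖∑ i ∈ Finset.range n, ((c i / R) * (R * a i)) • u i‖ := by
    refine (h _ n).trans_eq ?_
    congr 2
    refine Finset.sum_congr rfl fun i _ => ?_
    field_simp
  _ ≤ C * ‖∑ i ∈ Finset.range n, (R * a i) • u i‖ := by
    gcongr
    refine hu.norm_sum_mul_le _ _ (fun i => ?_) n
    rw [abs_div, abs_of_pos hR, div_le_one hR]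
    exact hc i
  _ = C * R * ‖∑ i ∈ Finset.range n, a i • u i‖ := by
    simp only [← smul_smul, ← Finset.smul_sum, norm_smul, Real.norm_eq_abs, abs_of_pos hR]
    ring

/-- The coefficients of a normalized `1`-unconditional sequence are bounded by the norm of the
sum, so errors of size `2⁻ⁱ` cost at most `2` in the constant. -/
theorem DomBy.of_norm_sub_le_geometric {y : ℕ → X} (h : DomBy u y C)
    (hu : IsOneUnconditional u) (hn : IsNormalized u)
    (hxy : ∀ i, ‖x i - y i‖ ≤ (1 / 2) ^ i) : DomBy u x (C + 2) := fun a n => by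
  set S := ‖∑ i ∈ Finset.range n, a i • u i‖
  have herr : ‖∑ i ∈ Finset.range n, a i • (x i - y i)‖ ≤ 2 * S := calc
    _ ≤ ∑ i ∈ Finset.range n, ‖a i • (x i - y i)‖ := norm_sum_le _ _
    _ ≤ ∑ i ∈ Finset.range n, S * (1 / 2) ^ i := by
      refine Finset.sum_le_sum fun i hi => ?_
      rw [norm_smul, Real.norm_eq_abs]
      exact mul_le_mul (hu.abs_le_norm_sum hn a (Finset.mem_range.1 hi)) (hxy i)
        (norm_nonneg _) (norm_nonneg _)
    _ = S * ∑ i ∈ Finset.range n, (1 / 2 : ℝ) ^ i := by rw [Finset.mul_sum]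
    _ ≤ S * 2 := mul_le_mul_of_nonneg_left (sum_geometric_two_le n) (norm_nonneg _)
    _ = 2 * S := mul_comm _ _
  have hsplit : ∑ i ∈ Finset.range n, a i • x i
      = ∑ i ∈ Finset.range n, a i • y i + ∑ i ∈ Finset.range n, a i • (x i - y i) := by
    simp only [smul_sub, Finset.sum_sub_distrib, add_sub_cancel]
  calc _ ≤ C * S + 2 * S := by
        rw [hsplit]; exact (norm_add_le _ _).trans (add_le_add (h a n) herr)
    _ = (C + 2) * S := by ring

end Domination

/-- Mazur's lemma for the tails of a weakly null sequence. -/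
theorem WeaklyNullSeq.zero_mem_closure_convexHull {E : Type*} [NormedAddCommGroup E]
    [NormedSpace ℝ E] {u : ℕ → E} (hu : WeaklyNullSeq u) (j₀ : ℕ) :
    (0 : E) ∈ closure (convexHull ℝ (u '' Ici j₀)) := by
  by_contra h
  obtain ⟨f, c, hlt, hc⟩ :=
    geometric_hahn_banach_closed_point (convex_convexHull ℝ _).closure isClosed_closure h
  rw [map_zero] at hc
  obtain ⟨j, hj, hjj₀⟩ :=
    (((hu f).eventually (lt_mem_nhds hc)).and (eventually_ge_atTop j₀)).exists
  exact (hlt _ (subset_closure (subset_convexHull ℝ _ ⟨j, hjj₀, rfl⟩))).not_gt hj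

theorem Submodule.exists_subseq_tendsto_of_norm_le {E : Type*} [NormedAddCommGroup E]
    [NormedSpace ℝ E] (S : Submodule ℝ E) [FiniteDimensional ℝ S] {x : ℕ → E}
    (hxS : ∀ k, x k ∈ S) {R : ℝ} (hR : ∀ k, ‖x k‖ ≤ R) :
    ∃ L, ∃ φ : ℕ → ℕ, StrictMono φ ∧ Tendsto (x ∘ φ) atTop (𝓝 L) := by
  obtain ⟨L, -, φ, hφ, hL⟩ :=
    tendsto_subseq_of_bounded (Metric.isBounded_closedBall (x := (0 : S)) (r := R))
      (x := fun k => ⟨x k, hxS k⟩) fun k => by simpa using hR k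
  exact ⟨L, φ, hφ, (continuous_subtype_val.tendsto L).comp hL⟩

theorem WeaklyNullSeq.tendsto_zero {E : Type*} [NormedAddCommGroup E] [NormedSpace ℝ E]
    [FiniteDimensional ℝ E] {u : ℕ → E} (hu : WeaklyNullSeq u) : Tendsto u atTop (𝓝 0) := by
  set e := (Module.finBasis ℝ E).equivFun.toContinuousLinearEquiv
  have he : Tendsto (fun k => e (u k)) atTop (𝓝 0) :=
    tendsto_pi_nhds.2 fun i => hu ((ContinuousLinearMap.proj i).comp e.toContinuousLinearMap)
  simpa [Function.comp_def] using (e.symm.continuous.tendsto 0).comp he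

theorem Submodule.exists_norm_le_add_ne_zero {E : Type*} [NormedAddCommGroup E]
    [NormedSpace ℝ E] {S : Submodule ℝ E} (hS : S ≠ ⊥) (w : E) {γ : ℝ} (hγ : 0 < γ) :
    ∃ s ∈ S, ‖s‖ ≤ γ ∧ w + s ≠ 0 := by
  by_cases hw : w = 0
  · obtain ⟨e, he, he0⟩ := (Submodule.ne_bot_iff S).1 hS
    refine ⟨(γ / ‖e‖) • e, S.smul_mem _ he, ?_, ?_⟩
    · rw [norm_smul, Real.norm_of_nonneg (by positivity),
        div_mul_cancel₀ _ (norm_ne_zero_iff.2 he0)]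
    · rw [hw, zero_add]
      exact smul_ne_zero (by positivity) he0
  · exact ⟨0, S.zero_mem, by simpa using hγ.le, by simpa using hw⟩

namespace FDD

variable {Z : Type*} [NormedAddCommGroup Z] [NormedSpace ℝ Z] (F : FDD Z)

theorem proj_apply (s : Finset ℕ) (z : Z) : F.proj s z = ∑ i ∈ s, F.P i z := by
  simp [proj]

theorem P_eq_ite_of_mem {i : ℕ} {e : Z} (he : e ∈ F.E i) (j : ℕ) :
    F.P j e = if j = i then e else 0 := by
  refine (F.unique e (fun j => if j = i then e else 0) (fun j => ?_) ?_ j).symm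
  · split_ifs with h
    · exact h ▸ he
    · exact zero_mem _
  · refine tendsto_atTop_of_eventually_const (i₀ := i + 1) fun n hn => ?_
    rw [Finset.sum_ite_eq' (Finset.range n) i, if_pos (Finset.mem_range.2 (by omega))]

theorem P_proj (s : Finset ℕ) (j : ℕ) (z : Z) :
    F.P j (F.proj s z) = if j ∈ s then F.P j z else 0 := by
  simp [proj_apply, F.P_eq_ite_of_mem (F.mem_E _ z)]

theorem tendsto_proj_range (z : Z) :
    Tendsto (fun n => F.proj (Finset.range n) z) atTop (𝓝 z) := by
  simpa only [proj_apply] using F.sum_eq z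

theorem proj_mem_sup (s : Finset ℕ) (z : Z) : F.proj s z ∈ s.sup F.E := by
  rw [proj_apply]
  exact Submodule.sum_mem _ fun i hi => Finset.le_sup (f := F.E) hi (F.mem_E i z)

theorem proj_range_add_proj_Ico {m M : ℕ} (h : m ≤ M) (z : Z) :
    F.proj (Finset.range m) z + F.proj (Finset.Ico m M) z = F.proj (Finset.range M) z := by
  simp only [proj_apply, Finset.sum_range_add_sum_Ico _ h]

theorem finiteDimensional_of_forall_ge_eq_bot {N : ℕ} (h : ∀ i, N ≤ i → F.E i = ⊥) :
    FiniteDimensional ℝ Z := by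
  have := F.finDim
  have hproj : ∀ z, F.proj (Finset.range N) z = z := fun z => by
    refine tendsto_nhds_unique (tendsto_atTop_of_eventually_const (i₀ := N) fun n hn => ?_)
      (F.tendsto_proj_range z)
    rw [← F.proj_range_add_proj_Ico hn, add_eq_left, proj_apply]
    refine Finset.sum_eq_zero fun i hi => ?_
    simpa [h i (Finset.mem_Ico.1 hi).1] using F.mem_E i z
  have htop : (Finset.range N).sup F.E = ⊤ :=
    Submodule.eq_top_iff'.2 fun z => hproj z ▸ F.proj_mem_sup _ z
  have : FiniteDimensional ℝ (⊤ : Submodule ℝ Z) := htop ▸ inferInstance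
  exact Submodule.topEquiv.finiteDimensional

theorem supp_proj_subset (s : Finset ℕ) (z : Z) : F.supp (F.proj s z) ⊆ s := fun j hj => by
  by_contra h
  exact hj (by rw [P_proj, if_neg (by exact_mod_cast h)])

theorem supp_add_subset (x y : Z) : F.supp (x + y) ⊆ F.supp x ∪ F.supp y := fun j hj => by
  by_contra h
  simp only [Set.mem_union, supp, Set.mem_ofPred_eq, not_or, not_not] at h
  exact hj (by rw [map_add, h.1, h.2, add_zero])

theorem supp_subset_of_mem {i : ℕ} {e : Z} (he : e ∈ F.E i) : F.supp e ⊆ {i} := fun j hj => by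
  by_contra h
  exact hj (by rw [F.P_eq_ite_of_mem he, if_neg (by simpa using h)])

theorem supp_smul {c : ℝ} (hc : c ≠ 0) (z : Z) : F.supp (c • z) = F.supp z := by
  ext j
  simp [supp, hc]

theorem minSupp_eq_of_mem {m : ℕ} {z : Z} (hm : m ∈ F.supp z) (h : F.supp z ⊆ Ici m) :
    F.minSupp z = m :=
  le_antisymm (Nat.sInf_le hm) (le_csInf ⟨m, hm⟩ h)

/-- Cut off both ends and, if the `m`-th coordinate vanishes, add a small vector of `E m`. -/
theorem exists_block_near (z : Z) {m : ℕ} (hm : F.E m ≠ ⊥) {γ : ℝ} (hγ : 0 < γ) :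
    ∃ b M, m ∈ F.supp b ∧ F.supp b ⊆ Ico m M ∧
      ‖b - z‖ ≤ ‖F.proj (Finset.range m) z‖ + γ := by
  obtain ⟨M₀, hM₀⟩ := Metric.tendsto_atTop.1 (F.tendsto_proj_range z) (γ / 2) (by positivity)
  set M := max M₀ (m + 1)
  have hmM : m ∈ Finset.Ico m M := Finset.mem_Ico.2 ⟨le_rfl, by omega⟩
  obtain ⟨s, hsE, hs, hne⟩ :=
    Submodule.exists_norm_le_add_ne_zero hm (F.P m z) (half_pos hγ)
  refine ⟨F.proj (Finset.Ico m M) z + s, M, ?_, ?_, ?_⟩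
  · change F.P m _ ≠ 0
    rwa [map_add, P_proj, if_pos hmM, F.P_eq_ite_of_mem hsE, if_pos rfl]
  · refine (F.supp_add_subset _ _).trans (Set.union_subset ?_ ?_)
    · simpa using F.supp_proj_subset (Finset.Ico m M) z
    · simpa using (F.supp_subset_of_mem hsE).trans (by simpa using hmM)
  · have hdist := hM₀ M (le_max_left _ _)
    rw [dist_eq_norm] at hdist
    rw [← F.proj_range_add_proj_Ico (le_of_lt (Finset.mem_Ico.1 hmM).2) z] at hdist
    calc ‖F.proj (Finset.Ico m M) z + s - z‖
        = ‖((F.proj (Finset.range m) z + F.proj (Finset.Ico m M) z - z)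
          - F.proj (Finset.range m) z) + s‖ := by congr 1; abel
      _ ≤ γ / 2 + ‖F.proj (Finset.range m) z‖ + γ / 2 :=
        (norm_add_le _ _).trans (add_le_add ((norm_sub_le _ _).trans (by gcongr)) hs)
      _ = _ := by ring

variable {F} {X : Type*} [NormedAddCommGroup X] [NormedSpace ℝ X]

theorem norm_proj_range_le (hbm : F.Bimonotone) (n : ℕ) (z : Z) :
    ‖F.proj (Finset.range n) z‖ ≤ ‖z‖ := by
  cases n with
  | zero => simp [proj_apply]
  | succ n => simpa [Nat.range_succ_eq_Icc_zero] using hbm 0 n z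

/-- Lifts `w k` of the `u k` have convergent heads along a subsequence; a convex combination
`c` of these lifts has `Q c` small (Mazur), so `w k - c` plus a small lift of `Q c` is a lift of
`u k` whose head is small. -/
theorem exists_lift_norm_proj_range_le (hbm : F.Bimonotone) (Q : Z →L[ℝ] X) {K : ℝ}
    (hK : 0 ≤ K) (hlift : ∀ y, ∃ z, Q z = y ∧ ‖z‖ ≤ K * ‖y‖) {u : ℕ → X}
    (hu : WeaklyNullSeq u) (hu₁ : ∀ k, ‖u k‖ ≤ 1) (m : ℕ) {η : ℝ} (hη : 0 < η) :
    ∃ k z, Q z = u k ∧ ‖z‖ ≤ 2 * K + η ∧ ‖F.proj (Finset.range m) z‖ ≤ η := by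
  have := F.finDim
  set P := F.proj (Finset.range m)
  choose w hwQ hwK using fun k => hlift (u k)
  replace hwK : ∀ k, ‖w k‖ ≤ K := fun k =>
    (hwK k).trans (mul_le_of_le_one_right hK (hu₁ k))
  obtain ⟨L, φ, hφ, hL⟩ := Submodule.exists_subseq_tendsto_of_norm_le _
    (fun k => F.proj_mem_sup _ (w k)) fun k => (norm_proj_range_le hbm m _).trans (hwK k)
  set δ := η / (K + 2)
  have hδ : 0 < δ := by positivity
  obtain ⟨j₀, hj₀⟩ := Metric.tendsto_atTop.1 hL δ hδ
  set A := (fun j => w (φ j)) '' Ici j₀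
  obtain ⟨p, hp, hpδ⟩ := Metric.mem_closure_iff.1
    (WeaklyNullSeq.zero_mem_closure_convexHull (fun f => (hu f).comp hφ.tendsto_atTop) j₀) δ hδ
  rw [dist_zero_left] at hpδ
  have hQA : (fun j => u (φ j)) '' Ici j₀ = Q.toLinearMap '' A := by
    simp only [A, Set.image_image, ContinuousLinearMap.coe_coe, hwQ]
  rw [hQA, ← LinearMap.image_convexHull] at hp
  obtain ⟨c, hc, rfl⟩ := hp
  replace hpδ : ‖Q c‖ ≤ δ := hpδ.le
  have hcK : ‖c‖ ≤ K := by
    simpa using convexHull_min (s := A)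
      (fun _ ⟨j, _, hj⟩ => hj ▸ by simpa using hwK (φ j)) (convex_closedBall 0 K) hc
  have hcL : ‖P c - L‖ ≤ δ := by
    simpa [dist_eq_norm] using convexHull_min (s := A)
      (t := P.toLinearMap ⁻¹' Metric.closedBall L δ)
      (fun _ ⟨j, hj, hjw⟩ => hjw ▸ by simpa [dist_eq_norm] using (hj₀ j hj).le)
      ((convex_closedBall L δ).linear_preimage _) hc
  obtain ⟨d, hdQ, hdK⟩ := hlift (Q c)
  have hd : ‖d‖ ≤ K * δ := hdK.trans (by gcongr)
  have hKδ : K * δ + 2 * δ = η := by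
    rw [← add_mul, mul_comm, div_mul_cancel₀ _ (by positivity)]
  refine ⟨φ j₀, w (φ j₀) - c + d, by simp [hwQ, hdQ], ?_, ?_⟩
  · calc ‖w (φ j₀) - c + d‖ ≤ K + K + K * δ := (norm_add_le _ _).trans
          (add_le_add ((norm_sub_le _ _).trans (add_le_add (hwK _) hcK)) hd)
      _ ≤ 2 * K + η := by nlinarith
  · have hw₀ : ‖P (w (φ j₀)) - L‖ ≤ δ := by simpa [dist_eq_norm] using (hj₀ j₀ le_rfl).le
    calc ‖P (w (φ j₀) - c + d)‖ = ‖(P (w (φ j₀)) - L) - (P c - L) + P d‖ := by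
          rw [map_add, map_sub]; abel_nf
      _ ≤ δ + δ + K * δ := (norm_add_le _ _).trans
          (add_le_add ((norm_sub_le _ _).trans (add_le_add hw₀ hcL))
            ((norm_proj_range_le hbm m d).trans hd))
      _ = η := by linarith

theorem exists_block_approx (hbm : F.Bimonotone) (Q : Z →L[ℝ] X) {K : ℝ}
    (hK : 0 ≤ K) (hlift : ∀ y, ∃ z, Q z = y ∧ ‖z‖ ≤ K * ‖y‖) {u : ℕ → X}
    (hu : WeaklyNullSeq u) (hu₁ : ∀ k, ‖u k‖ ≤ 1) {m : ℕ} (hm : F.E m ≠ ⊥) {ε : ℝ}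
    (hε : 0 < ε) :
    ∃ k b M, m ∈ F.supp b ∧ F.supp b ⊆ Ico m M ∧ ‖b‖ ≤ 2 * K + 2 ∧ ‖u k - Q b‖ ≤ ε := by
  set δ := min 1 (ε / (‖Q‖ + 1))
  have hδ : 0 < δ := by positivity
  obtain ⟨k, z, hzQ, hzK, hzP⟩ :=
    exists_lift_norm_proj_range_le hbm Q hK hlift hu hu₁ m (half_pos hδ)
  obtain ⟨b, M, hmb, hsupp, hbz⟩ := F.exists_block_near z hm (half_pos hδ)
  replace hbz : ‖b - z‖ ≤ δ := by linarith
  refine ⟨k, b, M, hmb, hsupp, ?_, ?_⟩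
  · calc ‖b‖ ≤ ‖z‖ + ‖b - z‖ := norm_le_norm_add_norm_sub' b z
      _ ≤ 2 * K + 2 := by linarith [min_le_left 1 (ε / (‖Q‖ + 1))]
  · calc ‖u k - Q b‖ = ‖Q (b - z)‖ := by rw [map_sub, hzQ, norm_sub_rev]
      _ ≤ ‖Q‖ * (ε / (‖Q‖ + 1)) :=
        (Q.le_opNorm _).trans (by gcongr; exact hbz.trans (min_le_right _ _))
      _ ≤ ε := by
        rw [mul_div_assoc', div_le_iff₀ (by positivity)]
        nlinarith

theorem exists_ge_ne_bot {Q : Z →L[ℝ] X} (hQ : Function.Surjective Q) {u : ℕ → X}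
    (hu : WeaklyNullSeq u) (hu₁ : ∀ k, ‖u k‖ = 1) (N : ℕ) : ∃ m, N ≤ m ∧ F.E m ≠ ⊥ := by
  by_contra! h
  have := F.finiteDimensional_of_forall_ge_eq_bot h
  have : FiniteDimensional ℝ X := Module.Finite.of_surjective Q.toLinearMap hQ
  have := hu.tendsto_zero.norm
  simp only [hu₁, norm_zero] at this
  exact one_ne_zero (tendsto_nhds_unique tendsto_const_nhds this)

end FDD

theorem exists_seq_of_forall_exists_step {α : Type*} (P : ℕ → α → Prop)
    (R : ℕ → α → α → Prop) {a₀ : α} (h₀ : P 0 a₀)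
    (h : ∀ l a, P l a → ∃ b, P (l + 1) b ∧ R l a b) :
    ∃ f : ℕ → α, f 0 = a₀ ∧ (∀ l, P l (f l)) ∧ ∀ l, R l (f l) (f (l + 1)) := by
  choose g hgP hgR using h
  let f : ∀ l, {a // P l a} := fun l =>
    Nat.rec ⟨a₀, h₀⟩ (fun l a => ⟨g l a.1 a.2, hgP l a.1 a.2⟩) l
  exact ⟨fun l => (f l).1, rfl, fun l => (f l).2, fun l => hgR l _ (f l).2⟩

theorem image_range_two_mul_succ (n : ℕ → ℕ) (l : ℕ) :
    (Finset.range (2 * (l + 1))).image n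
      = insert (n (2 * l + 1)) (insert (n (2 * l)) ((Finset.range (2 * l)).image n)) := by
  rw [show 2 * (l + 1) = 2 * l + 1 + 1 by ring, Finset.range_add_one, Finset.range_add_one,
    Finset.image_insert, Finset.image_insert]

section Trees

variable {X : Type*} [NormedAddCommGroup X] [NormedSpace ℝ X] {x : Finset ℕ → X}

theorem WNEvenTree.weaklyNullSeq_insert (hx : WNEvenTree x) {s : Finset ℕ} (hs : Odd s.card)
    (r : ℕ) : WeaklyNullSeq (fun k => x (insert (k + r) s)) :=
  fun f => (hx.2 s hs f).comp (tendsto_add_atTop_nat r)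

theorem WNEvenTree.norm_insert (hx : WNEvenTree x) {s : Finset ℕ} (hs : Odd s.card) {k : ℕ}
    (hk : k ∉ s) : ‖x (insert k s)‖ = 1 :=
  hx.1 _ (by rw [Finset.card_insert_of_notMem hk]; exact hs.add_one)

variable {Z : Type*} [NormedAddCommGroup Z] [NormedSpace ℝ Z] {F : FDD Z}

theorem FDD.exists_branch_step (hbm : F.Bimonotone) {Q : Z →L[ℝ] X}
    (hQ : Function.Surjective Q) {K : ℝ} (hK : 0 ≤ K)
    (hlift : ∀ y, ∃ z, Q z = y ∧ ‖z‖ ≤ K * ‖y‖) (hx : WNEvenTree x) {s : Finset ℕ}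
    (hs : Even s.card) {p : ℕ} (hsp : ∀ i ∈ s, i < p) {ε : ℝ} (hε : 0 < ε) :
    ∃ m k b M, p ≤ m ∧ m < k ∧ m ∈ F.supp b ∧ F.supp b ⊆ Ico m M ∧ ‖b‖ ≤ 2 * K + 2 ∧
      ‖x (insert k (insert m s)) - Q b‖ ≤ ε := by
  have hfresh : ∀ q, p ≤ q → q ∉ s := fun q hq hqs => by have := hsp q hqs; omega
  have hodd : ∀ q, p ≤ q → Odd (insert q s).card := fun q hq => by
    rw [Finset.card_insert_of_notMem (hfresh q hq)]; exact hs.add_one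
  have hnode : ∀ q, p ≤ q → WeaklyNullSeq (fun k => x (insert (k + (q + 1)) (insert q s))) ∧
      ∀ k, ‖x (insert (k + (q + 1)) (insert q s))‖ = 1 := fun q hq =>
    ⟨hx.weaklyNullSeq_insert (hodd q hq) _, fun k => hx.norm_insert (hodd q hq) (by
      rw [Finset.mem_insert, not_or]; exact ⟨by omega, hfresh _ (by omega)⟩)⟩
  obtain ⟨m, hpm, hm⟩ := F.exists_ge_ne_bot hQ (hnode p le_rfl).1 (hnode p le_rfl).2 p
  obtain ⟨k, b, M, hmb, hsupp, hbK, hkb⟩ := F.exists_block_approx hbm Q hK hlift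
    (hnode m hpm).1 (fun k => ((hnode m hpm).2 k).le) hm hε
  exact ⟨m, k + (m + 1), b, M, hpm, by omega, hmb, hsupp, hbK, hkb⟩

theorem FDD.exists_branch_near_blocks (hbm : F.Bimonotone) {Q : Z →L[ℝ] X}
    (hQ : Function.Surjective Q) {K : ℝ} (hK : 0 ≤ K)
    (hlift : ∀ y, ∃ z, Q z = y ∧ ‖z‖ ≤ K * ‖y‖) (hx : WNEvenTree x) :
    ∃ n : ℕ → ℕ, StrictMono n ∧ ∃ b : ℕ → Z,
      (∀ l, n (2 * l) ∈ F.supp (b l)) ∧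
      (∀ l, F.supp (b l) ⊆ Ico (n (2 * l)) (n (2 * (l + 1)))) ∧
      (∀ l, ‖b l‖ ≤ 2 * K + 2) ∧ ∀ l, ‖x (branchSet n l) - Q (b l)‖ ≤ (1 / 2) ^ l := by
  -- the state `(s, p)` is the branch chosen so far and a strict upper bound for everything used
  obtain ⟨f, hf₀, hfP, hfR⟩ := exists_seq_of_forall_exists_step
    (fun l (a : Finset ℕ × ℕ) => a.1.card = 2 * l ∧ ∀ i ∈ a.1, i < a.2)
    (fun l a a' => ∃ m k b, a.2 ≤ m ∧ m < k ∧ a'.1 = insert k (insert m a.1) ∧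
      m ∈ F.supp b ∧ F.supp b ⊆ Ico m a'.2 ∧ ‖b‖ ≤ 2 * K + 2 ∧
      ‖x a'.1 - Q b‖ ≤ (1 / 2) ^ l)
    (a₀ := (∅, 0)) (by simp) fun l ⟨s, p⟩ ⟨(hcard : s.card = 2 * l), hsp⟩ => by
      obtain ⟨m, k, b, M, hpm, hmk, hmb, hsupp, hbK, hkb⟩ := F.exists_branch_step hbm hQ hK
        hlift hx ⟨l, by omega⟩ hsp (ε := (1 / 2) ^ l) (by positivity)
      have hm : m ∉ s := fun h => by have := hsp m h; omega
      have hk : k ∉ insert m s := by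
        rw [Finset.mem_insert, not_or]; exact ⟨by omega, fun h => by have := hsp k h; omega⟩
      refine ⟨(insert k (insert m s), max (k + 1) M), ⟨?_, ?_⟩, m, k, b, hpm, hmk, rfl, hmb,
        hsupp.trans (Set.Ico_subset_Ico_right (le_max_right _ _)), hbK, hkb⟩
      · rw [Finset.card_insert_of_notMem hk, Finset.card_insert_of_notMem hm, hcard]; ring
      · simp only [Finset.mem_insert]
        rintro i (rfl | rfl | hi)
        · omega
        · omega
        · have := hsp i hi; omega
  choose m k b hpm hmk hs hmb hsupp hbK hkb using hfR
  have hkp : ∀ l, k l < (f (l + 1)).2 := fun l => (hfP (l + 1)).2 _ (by simp [hs l])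
  set n : ℕ → ℕ := fun j => if j % 2 = 0 then m (j / 2) else k (j / 2)
  have hn₀ : ∀ l, n (2 * l) = m l := fun l => by simp [n]
  have hn₁ : ∀ l, n (2 * l + 1) = k l := fun l => by simp [n, Nat.add_mod, Nat.add_div]
  have hn : StrictMono n := strictMono_nat_of_lt_succ fun j => by
    obtain ⟨l, rfl | rfl⟩ := Nat.even_or_odd' j
    · rw [hn₀, hn₁]; exact hmk l
    · rw [hn₁, show 2 * l + 1 + 1 = 2 * (l + 1) by ring, hn₀]
      exact (hkp l).trans_le (hpm (l + 1))
  have himage : ∀ l, (Finset.range (2 * l)).image n = (f l).1 := fun l => by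
    induction l with
    | zero => simp [hf₀]
    | succ l ih => rw [image_range_two_mul_succ, ih, hn₀, hn₁, hs]
  refine ⟨n, hn, b, fun l => hn₀ l ▸ hmb l, fun l => ?_, hbK, fun l => ?_⟩
  · rw [hn₀, hn₀]
    exact (hsupp l).trans (Set.Ico_subset_Ico_right (hpm (l + 1)))
  · change ‖x ((Finset.range (2 * (l + 1))).image n) - Q (b l)‖ ≤ _
    rw [himage]
    exact hkb l

end Trees

theorem FDD.UpperBlockC.domBy_of_supp {Z : Type*} [NormedAddCommGroup Z] [NormedSpace ℝ Z]
    {F : FDD Z} {V : Type*} [NormedAddCommGroup V] [NormedSpace ℝ V] {v : ℕ → V} {C R : ℝ}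
    (hF : F.UpperBlockC v C) (hv : IsOneUnconditional v) (hC : 0 ≤ C) (hR : 0 < R)
    {k : ℕ → ℕ} (hk : StrictMono k) {b : ℕ → Z} (hmem : ∀ l, k l ∈ F.supp (b l))
    (hsupp : ∀ l, F.supp (b l) ⊆ Ico (k l) (k (l + 1))) (hbR : ∀ l, ‖b l‖ ≤ R) :
    DomBy (fun l => v (k l)) b (C * R) := by
  have hb : ∀ l, ‖b l‖ ≠ 0 := fun l =>
    norm_ne_zero_iff.2 fun h => hmem l (by rw [h, map_zero])
  have hsuppβ : ∀ l, F.supp (‖b l‖⁻¹ • b l) = F.supp (b l) := fun l =>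
    F.supp_smul (inv_ne_zero (hb l)) _
  have hβ := hF (fun l => ‖b l‖⁻¹ • b l) ⟨k, hk, fun l => (hsuppβ l).symm ▸ hsupp l⟩
    fun l => by rw [norm_smul, norm_inv, norm_norm, inv_mul_cancel₀ (hb l)]
  have hmin : ∀ l, F.minSupp (‖b l‖⁻¹ • b l) = k l := fun l => by
    rw [minSupp, hsuppβ]
    exact F.minSupp_eq_of_mem (hmem l) ((hsupp l).trans Ico_subset_Ici_self)
  simp only [hmin] at hβ
  simpa [smul_smul, mul_inv_cancel₀ (hb _)] using
    hβ.smul_of_isOneUnconditional (hv.comp_strictMono hk) hC hR (c := fun l => ‖b l‖)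
      fun l => by rw [abs_norm]; exact hbR l

theorem upper_tree_of_quotient_upper_block_general
    {X : Type*} [NormedAddCommGroup X] [NormedSpace ℝ X] [CompleteSpace X]
    {Z : Type*} [NormedAddCommGroup Z] [NormedSpace ℝ Z] [CompleteSpace Z]
    {V : Type*} [NormedAddCommGroup V] [NormedSpace ℝ V]
    (v : ℕ → V)
    (hvnorm : IsNormalized v) (hvuncond : IsOneUnconditional v)
    (F : FDD Z) (hbm : F.Bimonotone) (hub : F.UpperBlock v)
    (Q : Z →L[ℝ] X) (hQ : Function.Surjective Q) :
    UpperTree v X := by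
  obtain ⟨Cb, hCb₁, hCb⟩ := hub
  obtain ⟨K, hK, hlift⟩ := Q.exists_preimage_norm_le hQ
  have hC : 0 ≤ ‖Q‖ * (Cb * (2 * K + 2)) := by positivity
  refine ⟨‖Q‖ * (Cb * (2 * K + 2)) + 2, by linarith, fun x hx => ?_⟩
  obtain ⟨n, hn, b, hmem, hsupp, hbK, hxb⟩ :=
    F.exists_branch_near_blocks hbm hQ hK.le hlift hx
  have hn₂ : StrictMono fun l => n (2 * l) := hn.comp (strictMono_mul_left_of_pos two_pos)
  refine ⟨n, hn, ?_⟩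
  have hblocks := hCb.domBy_of_supp hvuncond (by linarith) (by positivity) hn₂ hmem hsupp hbK
  exact (hblocks.map Q).of_norm_sub_le_geometric (hvuncond.comp_strictMono hn₂)
    (fun l => hvnorm _) hxb

/-- Quotients of spaces with a shrinking bimonotone FDD satisfying subsequential `V`
upper block estimates satisfy subsequential `V` upper tree estimates (the implication
(3) ⇒ (1) of Theorem 1.1). -/
theorem upper_tree_of_quotient_upper_block
    {X : Type*} [NormedAddCommGroup X] [NormedSpace ℝ X] [CompleteSpace X]
    {Z : Type*} [NormedAddCommGroup Z] [NormedSpace ℝ Z] [CompleteSpace Z]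
    {V : Type*} [NormedAddCommGroup V] [NormedSpace ℝ V] [CompleteSpace V]
    (v : ℕ → V)
    (hvnorm : IsNormalized v) (hvuncond : IsOneUnconditional v)
    (hvbasic : IsBasicSeq v) (hvright : RightDominant v)
    (F : FDD Z) (hFsh : F.Shrinking) (hbm : F.Bimonotone) (hub : F.UpperBlock v)
    (Q : Z →L[ℝ] X) (hQ : Function.Surjective Q) :
    UpperTree v X :=
  upper_tree_of_quotient_upper_block_general v hvnorm hvuncond F hbm hub Q hQ
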